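/- arXiv:1409.1155 — 2 statements merged into one kernel-verified Lean document; each statement's English description precedes it below -/
import Mathlib

section
/- Let A ∈ L^∞(Ω, M_{αβ}) be stationary ergodic coefficients, ξ ∈ ℝ^d a unit vector, and take ξ' = ξ. For T > 0 let φ_T, φ'_T be the regularized corrector and dual regularized corrector, and A_T := A_{T,1} the associated approximation of the homogenized coefficients. Then ξ·A_Tξ = ½E[(ξ+∇φ_T)·A(ξ+∇φ_T)] + ½E[(ξ+∇φ'_T)·A(ξ+∇φ'_T)] + (2T)^{-1}E[(φ_T − φ'_T)²], where all fields are evaluated at 0. In particular ξ·A_Tξ ≥ α for every T > 0, i.e. A_T is coercive, even for non-symmetric A. -/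
open MeasureTheory Filter Set
open scoped Topology

noncomputable section

def dotp {d : ℕ} (v w : Fin d → ℝ) : ℝ := ∑ i, v i * w i

def mvec {d : ℕ} (M : Fin d → Fin d → ℝ) (v : Fin d → ℝ) : Fin d → ℝ := fun i => ∑ j, M i j * v j

def mtrans {d : ℕ} (M : Fin d → Fin d → ℝ) : Fin d → Fin d → ℝ := fun i j => M j i

def MemEll {d : ℕ} (α β : ℝ) (M : Fin d → Fin d → ℝ) : Prop :=
  (∀ ξ : Fin d → ℝ, α * dotp ξ ξ ≤ dotp ξ (mvec M ξ)) ∧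
  (∀ ξ : Fin d → ℝ, dotp (mvec M ξ) (mvec M ξ) ≤ β ^ 2 * dotp ξ ξ)

def mdist {d : ℕ} (M N : Fin d → Fin d → ℝ) : ℝ := Real.sqrt (∑ i, ∑ j, (M i j - N i j) ^ 2)

def rich {X : Type*} [AddCommGroup X] [Module ℝ X] (φ : ℝ → X) : ℕ → ℝ → X
  | 0, T => φ T
  | 1, T => φ T
  | (k + 2), T =>
      (((2:ℝ) ^ (k + 1) - 1)⁻¹) •
        (((2:ℝ) ^ (k + 1)) • rich φ (k + 1) (2 * T) - rich φ (k + 1) T)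

/-- `i`-th standard basis vector of `ℝ^d`. -/
def evec {d : ℕ} (i : Fin d) : Fin d → ℝ := fun j => if j = i then 1 else 0

def IsL2Deriv {Ω : Type*} [MeasurableSpace Ω] {d : ℕ} (μ : Measure Ω)
    (θ : (Fin d → ℝ) → Ω → Ω) (ψ : Ω → ℝ) (i : Fin d) (gi : Ω → ℝ) : Prop :=
  Tendsto (fun h : ℝ => ∫ ω, ((ψ (θ (h • evec i) ω) - ψ ω) / h - gi ω) ^ 2 ∂μ)
    (𝓝[≠] (0:ℝ)) (𝓝 0)

def InH {Ω : Type*} [MeasurableSpace Ω] {d : ℕ} (μ : Measure Ω)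
    (θ : (Fin d → ℝ) → Ω → Ω) (ψ : Ω → ℝ) (g : Ω → Fin d → ℝ) : Prop :=
  MemLp ψ 2 μ ∧ (∀ i, MemLp (fun ω => g ω i) 2 μ) ∧
    ∀ i, IsL2Deriv μ θ ψ i fun ω => g ω i

def IsRegCorrector {Ω : Type*} [MeasurableSpace Ω] {d : ℕ} (μ : Measure Ω)
    (θ : (Fin d → ℝ) → Ω → Ω) (B : Ω → Fin d → Fin d → ℝ)
    (ζ : Fin d → ℝ) (T : ℝ) (φ : Ω → ℝ) (g : Ω → Fin d → ℝ) : Prop :=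
  InH μ θ φ g ∧
    ∀ ψ gψ, InH μ θ ψ gψ →
      ∫ ω, (T⁻¹ * φ ω * ψ ω + dotp (gψ ω) (mvec (B ω) (ζ + g ω))) ∂μ = 0

def ErgodicGroup {Ω : Type*} [MeasurableSpace Ω] {d : ℕ} (μ : Measure Ω)
    (θ : (Fin d → ℝ) → Ω → Ω) : Prop :=
  (∀ ω, θ 0 ω = ω) ∧
  (∀ x y ω, θ (x + y) ω = θ x (θ y ω)) ∧
  (∀ x, MeasurePreserving (θ x) μ μ) ∧
  Measurable (fun p : Ω × (Fin d → ℝ) => θ p.2 p.1) ∧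
  (∀ F : Set Ω, MeasurableSet F → (∀ x, θ x '' F ⊆ F) → μ F = 0 ∨ μ F = 1)

def IsCorrectorGrad {Ω : Type*} [MeasurableSpace Ω] {d : ℕ} (μ : Measure Ω)
    (GT : ℝ → Ω → Fin d → ℝ) (Φ : Ω → Fin d → ℝ) : Prop :=
  (∀ i, MemLp (fun ω => Φ ω i) 2 μ) ∧ (∀ i, ∫ ω, Φ ω i ∂μ = 0) ∧
    ∀ ψ : Ω → ℝ, MemLp ψ 2 μ → ∀ i,
      Tendsto (fun T : ℝ => ∫ ω, ψ ω * GT T ω i ∂μ) atTop (𝓝 (∫ ω, ψ ω * Φ ω i ∂μ))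

/-!
Test the corrector equation of `φ_T` with `φ'_T` and with `φ_T` itself, and that of `φ'_T`
(for `Aᵀ`) with `φ_T` and `φ'_T`. Since `(ξ + ∇φ'_T)·A∇φ_T = ∇φ_T·Aᵀ(ξ + ∇φ'_T)`, this writes the
mixed energy and the two pure energies in terms of `E[ξ·A(ξ + ∇φ_T)]`, `E[(ξ + ∇φ'_T)·Aξ]` and the
`L²` products of `φ_T, φ'_T`; eliminating these gives the identity. Coercivity follows because
each pure energy is at least `α E|ξ + ∇φ|² ≥ α|ξ|²`: gradients of stationary fields have mean
zero, as their difference quotients do by invariance of `μ`.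
-/

section LinearAlgebra

open Matrix

variable {d : ℕ}

theorem dotp_add_left (u v w : Fin d → ℝ) : dotp (u + v) w = dotp u w + dotp v w :=
  add_dotProduct u v w

theorem dotp_add_right (u v w : Fin d → ℝ) : dotp u (v + w) = dotp u v + dotp u w :=
  dotProduct_add u v w

theorem mvec_add (M : Fin d → Fin d → ℝ) (v w : Fin d → ℝ) :
    mvec M (v + w) = mvec M v + mvec M w :=
  Matrix.mulVec_add M v w

theorem dotp_mvec_mtrans (M : Fin d → Fin d → ℝ) (u v : Fin d → ℝ) :
    dotp u (mvec (mtrans M) v) = dotp v (mvec M u) := by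
  change u ⬝ᵥ ((of M)ᵀ *ᵥ v) = v ⬝ᵥ (of M *ᵥ u)
  rw [Matrix.dotProduct_mulVec, Matrix.vecMul_transpose, dotProduct_comm]

theorem MemEll.abs_apply_le {α β : ℝ} {M : Fin d → Fin d → ℝ} (h : MemEll α β M) (i j : Fin d) :
    |M i j| ≤ |β| := by
  have hcol := h.2 (evec j)
  have hMe : mvec M (evec j) = fun k => M k j := by
    funext k; simp [mvec, evec]
  have hee : dotp (evec j) (evec j) = 1 := by simp [dotp, evec]
  rw [hMe, hee, mul_one] at hcol
  refine sq_le_sq.mp ((?_ : M i j ^ 2 ≤ ∑ k, M k j * M k j).trans hcol)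
  simpa only [sq] using
    Finset.single_le_sum (f := fun k => M k j * M k j) (fun k _ => mul_self_nonneg _)
      (Finset.mem_univ i)

end LinearAlgebra

section Integrals

variable {Ω : Type*} [MeasurableSpace Ω] {μ : Measure Ω} {d : ℕ}

theorem sq_integral_le_integral_sq [IsProbabilityMeasure μ] {f : Ω → ℝ} (hf : MemLp f 2 μ) :
    (∫ ω, f ω ∂μ) ^ 2 ≤ ∫ ω, f ω ^ 2 ∂μ := by
  have := ProbabilityTheory.variance_eq_sub hf ▸ ProbabilityTheory.variance_nonneg f μ
  simpa only [sub_nonneg, Pi.pow_apply] using this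

theorem integral_sub_sq {f g : Ω → ℝ} (hf : MemLp f 2 μ) (hg : MemLp g 2 μ) :
    ∫ ω, (f ω - g ω) ^ 2 ∂μ
      = ∫ ω, f ω * f ω ∂μ - 2 * ∫ ω, f ω * g ω ∂μ + ∫ ω, g ω * g ω ∂μ := by
  have hff : Integrable (fun ω => f ω * f ω) μ := hf.integrable_mul hf
  have hfg : Integrable (fun ω => f ω * g ω) μ := hf.integrable_mul hg
  have hgg : Integrable (fun ω => g ω * g ω) μ := hg.integrable_mul hg
  have hfffg : Integrable (fun ω => f ω * f ω - 2 * (f ω * g ω)) μ := hff.sub (hfg.const_mul 2)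
  calc ∫ ω, (f ω - g ω) ^ 2 ∂μ = ∫ ω, (f ω * f ω - 2 * (f ω * g ω) + g ω * g ω) ∂μ :=
        integral_congr_ae (ae_of_all _ fun ω => by ring)
    _ = _ := by
      rw [integral_add hfffg hgg, integral_sub hff (hfg.const_mul 2), integral_const_mul]

theorem integrable_dotp_mvec {A : Ω → Fin d → Fin d → ℝ} {C : ℝ} (hA : Measurable A)
    (hAC : ∀ᵐ ω ∂μ, ∀ i j, |A ω i j| ≤ C) {v w : Ω → Fin d → ℝ}
    (hv : ∀ i, MemLp (fun ω => v ω i) 2 μ) (hw : ∀ i, MemLp (fun ω => w ω i) 2 μ) :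
    Integrable (fun ω => dotp (v ω) (mvec (A ω) (w ω))) μ := by
  simp only [dotp, mvec, Finset.mul_sum]
  refine integrable_finsetSum _ fun i _ => integrable_finsetSum _ fun j _ => ?_
  have hAij : Measurable fun ω => A ω i j :=
    (measurable_pi_apply j).comp ((measurable_pi_apply i).comp hA)
  have hAw : MemLp (fun ω => A ω i j * w ω j) 2 μ := by
    refine (hw j).of_le_mul (c := C)
      (hAij.aestronglyMeasurable.mul (hw j).aestronglyMeasurable) ?_
    filter_upwards [hAC] with ω hω
    simp only [Real.norm_eq_abs, abs_mul]
    exact mul_le_mul_of_nonneg_right (hω i j) (abs_nonneg _)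
  exact (hv i).integrable_mul hAw

theorem dotp_le_integral_dotp_add [IsProbabilityMeasure μ] (ξ : Fin d → ℝ) {g : Ω → Fin d → ℝ}
    (hg : ∀ i, MemLp (fun ω => g ω i) 2 μ) (hg0 : ∀ i, ∫ ω, g ω i ∂μ = 0) :
    dotp ξ ξ ≤ ∫ ω, dotp (ξ + g ω) (ξ + g ω) ∂μ := by
  have hu : ∀ i, MemLp (fun ω => ξ i + g ω i) 2 μ := fun i => (memLp_const (ξ i)).add (hg i)
  simp only [dotp, Pi.add_apply]
  rw [integral_finsetSum (f := fun i ω => (ξ i + g ω i) * (ξ i + g ω i)) _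
    fun i _ => (hu i).integrable_mul (hu i)]
  refine Finset.sum_le_sum fun i _ => ?_
  have hmean : ∫ ω, (ξ i + g ω i) ∂μ = ξ i := by
    rw [integral_add (integrable_const _) ((hg i).integrable one_le_two), hg0]
    simp
  simpa only [hmean, sq] using sq_integral_le_integral_sq (hu i)

theorem mul_dotp_le_integral_dotp_mvec [IsProbabilityMeasure μ] {A : Ω → Fin d → Fin d → ℝ}
    {α β : ℝ} (hα : 0 ≤ α) (hA : Measurable A) (hAell : ∀ᵐ ω ∂μ, MemEll α β (A ω))
    (ξ : Fin d → ℝ) {g : Ω → Fin d → ℝ} (hg : ∀ i, MemLp (fun ω => g ω i) 2 μ)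
    (hg0 : ∀ i, ∫ ω, g ω i ∂μ = 0) :
    α * dotp ξ ξ ≤ ∫ ω, dotp (ξ + g ω) (mvec (A ω) (ξ + g ω)) ∂μ := by
  have hu : ∀ i, MemLp (fun ω => (ξ + g ω) i) 2 μ := fun i => (memLp_const (ξ i)).add (hg i)
  have hnorm : Integrable (fun ω => dotp (ξ + g ω) (ξ + g ω)) μ :=
    integrable_finsetSum _ fun i _ => (hu i).integrable_mul (hu i)
  have hbound : ∀ᵐ ω ∂μ, ∀ i j, |A ω i j| ≤ |β| :=
    hAell.mono fun ω hω => hω.abs_apply_le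
  calc α * dotp ξ ξ ≤ α * ∫ ω, dotp (ξ + g ω) (ξ + g ω) ∂μ :=
        mul_le_mul_of_nonneg_left (dotp_le_integral_dotp_add ξ hg hg0) hα
    _ = ∫ ω, α * dotp (ξ + g ω) (ξ + g ω) ∂μ := (integral_const_mul _ _).symm
    _ ≤ _ := integral_mono_ae (hnorm.const_mul α) (integrable_dotp_mvec hA hbound hu hu)
        (hAell.mono fun ω hω => hω.1 _)

end Integrals

section Correctors

variable {Ω : Type*} [MeasurableSpace Ω] {μ : Measure Ω} {d : ℕ} {θ : (Fin d → ℝ) → Ω → Ω}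

theorem InH.integral_grad_eq_zero [IsProbabilityMeasure μ]
    (hθ : ∀ x, MeasurePreserving (θ x) μ μ) {ψ : Ω → ℝ} {g : Ω → Fin d → ℝ}
    (h : InH μ θ ψ g) (i : Fin d) : ∫ ω, g ω i ∂μ = 0 := by
  obtain ⟨hψ, hg, hder⟩ := h
  have hbound : ∀ t : ℝ, (∫ ω, g ω i ∂μ) ^ 2
      ≤ ∫ ω, ((ψ (θ (t • evec i) ω) - ψ ω) / t - g ω i) ^ 2 ∂μ := by
    intro t
    have hshift : MemLp (fun ω => ψ (θ (t • evec i) ω)) 2 μ :=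
      hψ.comp_measurePreserving (hθ _)
    have hshift_mean : ∫ ω, ψ (θ (t • evec i) ω) ∂μ = ∫ ω, ψ ω ∂μ := by
      rw [← integral_map (hθ _).measurable.aemeasurable
        ((hθ _).map_eq.symm ▸ hψ.aestronglyMeasurable), (hθ _).map_eq]
    have hquot : MemLp (fun ω => (ψ (θ (t • evec i) ω) - ψ ω) / t) 2 μ := by
      simpa only [div_eq_inv_mul, Pi.sub_apply] using (hshift.sub hψ).const_mul t⁻¹
    have hmean : ∫ ω, ((ψ (θ (t • evec i) ω) - ψ ω) / t - g ω i) ∂μ = -∫ ω, g ω i ∂μ := by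
      rw [integral_sub (hquot.integrable one_le_two) ((hg i).integrable one_le_two),
        integral_div, integral_sub (hshift.integrable one_le_two) (hψ.integrable one_le_two),
        hshift_mean]
      simp
    calc (∫ ω, g ω i ∂μ) ^ 2
        = (∫ ω, ((ψ (θ (t • evec i) ω) - ψ ω) / t - g ω i) ∂μ) ^ 2 := by rw [hmean, neg_sq]
      _ ≤ _ := sq_integral_le_integral_sq (hquot.sub (hg i))
  exact pow_eq_zero_iff two_ne_zero |>.mp
    (le_antisymm (ge_of_tendsto' (hder i) hbound) (sq_nonneg _))

theorem IsRegCorrector.integral_flux_eq {B : Ω → Fin d → Fin d → ℝ} {ζ : Fin d → ℝ} {T : ℝ}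
    {φ : Ω → ℝ} {g : Ω → Fin d → ℝ} (hφ : IsRegCorrector μ θ B ζ T φ g)
    {ψ : Ω → ℝ} {gψ : Ω → Fin d → ℝ} (hψ : InH μ θ ψ gψ)
    (hflux : Integrable (fun ω => dotp (gψ ω) (mvec (B ω) (ζ + g ω))) μ) :
    ∫ ω, dotp (gψ ω) (mvec (B ω) (ζ + g ω)) ∂μ = -(T⁻¹ * ∫ ω, φ ω * ψ ω ∂μ) := by
  have hprod : Integrable (fun ω => T⁻¹ * φ ω * ψ ω) μ := by
    have hφψ : Integrable (fun ω => φ ω * ψ ω) μ := hφ.1.1.integrable_mul hψ.1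
    simpa only [mul_assoc] using hφψ.const_mul T⁻¹
  have hweak := hφ.2 ψ gψ hψ
  rw [integral_add hprod hflux] at hweak
  simp only [mul_assoc, integral_const_mul] at hweak
  linarith

theorem integral_dotp_mvec_energy_identity [IsFiniteMeasure μ] {A : Ω → Fin d → Fin d → ℝ}
    {C : ℝ} (hA : Measurable A) (hAC : ∀ᵐ ω ∂μ, ∀ i j, |A ω i j| ≤ C) {ξ : Fin d → ℝ} {T : ℝ}
    {φ φ' : Ω → ℝ} {g g' : Ω → Fin d → ℝ} (hφ : IsRegCorrector μ θ A ξ T φ g)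
    (hφ' : IsRegCorrector μ θ (fun ω => mtrans (A ω)) ξ T φ' g') :
    ∫ ω, dotp (ξ + g' ω) (mvec (A ω) (ξ + g ω)) ∂μ
      = (1/2) * ∫ ω, dotp (ξ + g ω) (mvec (A ω) (ξ + g ω)) ∂μ
        + (1/2) * ∫ ω, dotp (ξ + g' ω) (mvec (A ω) (ξ + g' ω)) ∂μ
        + (2 * T)⁻¹ * ∫ ω, (φ ω - φ' ω) ^ 2 ∂μ := by
  have I := fun {v w : Ω → Fin d → ℝ} => @integrable_dotp_mvec Ω _ μ d A C hA hAC v w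
  have hξ : ∀ i, MemLp (fun _ : Ω => ξ i) 2 μ := fun i => memLp_const _
  have hg := hφ.1.2.1
  have hg' := hφ'.1.2.1
  have hu : ∀ i, MemLp (fun ω => (ξ + g ω) i) 2 μ := fun i => (hξ i).add (hg i)
  have hu' : ∀ i, MemLp (fun ω => (ξ + g' ω) i) 2 μ := fun i => (hξ i).add (hg' i)
  have hφ_test_φ' := hφ.integral_flux_eq hφ'.1 (I hg' hu)
  have hφ_test_φ := hφ.integral_flux_eq hφ.1 (I hg hu)
  have hφ'_test_φ :=
    hφ'.integral_flux_eq hφ.1 (by simpa only [dotp_mvec_mtrans] using I hu' hg)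
  have hφ'_test_φ' :=
    hφ'.integral_flux_eq hφ'.1 (by simpa only [dotp_mvec_mtrans] using I hu' hg')
  simp only [dotp_mvec_mtrans] at hφ'_test_φ hφ'_test_φ'
  have hmix_left : ∫ ω, dotp (ξ + g' ω) (mvec (A ω) (ξ + g ω)) ∂μ
      = ∫ ω, dotp ξ (mvec (A ω) (ξ + g ω)) ∂μ + ∫ ω, dotp (g' ω) (mvec (A ω) (ξ + g ω)) ∂μ := by
    simp only [dotp_add_left]; exact integral_add (I hξ hu) (I hg' hu)
  have hpure : ∫ ω, dotp (ξ + g ω) (mvec (A ω) (ξ + g ω)) ∂μ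
      = ∫ ω, dotp ξ (mvec (A ω) (ξ + g ω)) ∂μ + ∫ ω, dotp (g ω) (mvec (A ω) (ξ + g ω)) ∂μ := by
    simp only [dotp_add_left]; exact integral_add (I hξ hu) (I hg hu)
  have hmix_right : ∫ ω, dotp (ξ + g' ω) (mvec (A ω) (ξ + g ω)) ∂μ
      = ∫ ω, dotp (ξ + g' ω) (mvec (A ω) ξ) ∂μ + ∫ ω, dotp (ξ + g' ω) (mvec (A ω) (g ω)) ∂μ := by
    simp only [mvec_add, dotp_add_right]; exact integral_add (I hu' hξ) (I hu' hg)
  have hpure' : ∫ ω, dotp (ξ + g' ω) (mvec (A ω) (ξ + g' ω)) ∂μ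
      = ∫ ω, dotp (ξ + g' ω) (mvec (A ω) ξ) ∂μ + ∫ ω, dotp (ξ + g' ω) (mvec (A ω) (g' ω)) ∂μ := by
    simp only [mvec_add, dotp_add_right]; exact integral_add (I hu' hξ) (I hu' hg')
  have hcomm : ∫ ω, φ' ω * φ ω ∂μ = ∫ ω, φ ω * φ' ω ∂μ := by simp only [mul_comm]
  rw [hcomm] at hφ'_test_φ
  rw [integral_sub_sq hφ.1.1 hφ'.1.1]
  linear_combination (1/2 : ℝ) * (hmix_left + hmix_right - hpure - hpure'
    + hφ_test_φ' - hφ_test_φ + hφ'_test_φ - hφ'_test_φ')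

end Correctors

theorem coercivity_of_A_T_general
    {Ω : Type*} [MeasurableSpace Ω] (μ : Measure Ω) [IsProbabilityMeasure μ]
    {d : ℕ} {α β : ℝ} (hα : 0 < α)
    (θ : (Fin d → ℝ) → Ω → Ω) (hθ : ErgodicGroup μ θ)
    (A : Ω → Fin d → Fin d → ℝ)
    (hAmeas : Measurable A) (hAell : ∀ᵐ ω ∂μ, MemEll α β (A ω))
    (ξ : Fin d → ℝ) (hξ : dotp ξ ξ = 1)
    -- regularized corrector and dual regularized corrector, both in direction `ξ`
    (φT φT' : ℝ → Ω → ℝ) (GφT GφT' : ℝ → Ω → Fin d → ℝ)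
    (hφT : ∀ T > (0:ℝ), IsRegCorrector μ θ A ξ T (φT T) (GφT T))
    (hφT' : ∀ T > (0:ℝ),
      IsRegCorrector μ θ (fun ω => mtrans (A ω)) ξ T (φT' T) (GφT' T)) :
    ∀ T > (0:ℝ),
      (∫ ω, dotp (ξ + GφT' T ω) (mvec (A ω) (ξ + GφT T ω)) ∂μ
        = (1/2) * ∫ ω, dotp (ξ + GφT T ω) (mvec (A ω) (ξ + GφT T ω)) ∂μ
          + (1/2) * ∫ ω, dotp (ξ + GφT' T ω) (mvec (A ω) (ξ + GφT' T ω)) ∂μ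
          + (2 * T)⁻¹ * ∫ ω, (φT T ω - φT' T ω) ^ 2 ∂μ) ∧
      α ≤ ∫ ω, dotp (ξ + GφT' T ω) (mvec (A ω) (ξ + GφT T ω)) ∂μ := by
  intro T hT
  have hθμ := hθ.2.2.1
  have hbound : ∀ᵐ ω ∂μ, ∀ i j, |A ω i j| ≤ |β| := hAell.mono fun ω hω => hω.abs_apply_le
  have hidentity :=
    integral_dotp_mvec_energy_identity hAmeas hbound (hφT T hT) (hφT' T hT)
  have henergy := mul_dotp_le_integral_dotp_mvec hα.le hAmeas hAell ξ (hφT T hT).1.2.1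
    ((hφT T hT).1.integral_grad_eq_zero hθμ)
  have henergy' := mul_dotp_le_integral_dotp_mvec hα.le hAmeas hAell ξ (hφT' T hT).1.2.1
    ((hφT' T hT).1.integral_grad_eq_zero hθμ)
  have hvar : 0 ≤ (2 * T)⁻¹ * ∫ ω, (φT T ω - φT' T ω) ^ 2 ∂μ :=
    mul_nonneg (by positivity) (integral_nonneg fun ω => sq_nonneg _)
  rw [hξ, mul_one] at henergy henergy'
  exact ⟨hidentity, by linarith⟩

/-- Proposition `prop:coerc`, case `k = 1`: energy identity for
`ξ·A_Tξ` and unconditional coercivity `ξ·A_Tξ ≥ α`, for `ξ' = ξ` a unit vector. -/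
theorem coercivity_of_A_T
    {Ω : Type*} [MeasurableSpace Ω] (μ : Measure Ω) [IsProbabilityMeasure μ]
    {d : ℕ} (hd : 2 ≤ d) {α β : ℝ} (hα : 0 < α) (hαβ : α ≤ β)
    (θ : (Fin d → ℝ) → Ω → Ω) (hθ : ErgodicGroup μ θ)
    (A : Ω → Fin d → Fin d → ℝ)
    (hAmeas : Measurable A) (hAell : ∀ᵐ ω ∂μ, MemEll α β (A ω))
    (ξ : Fin d → ℝ) (hξ : dotp ξ ξ = 1)
    -- regularized corrector and dual regularized corrector, both in direction `ξ`
    (φT φT' : ℝ → Ω → ℝ) (GφT GφT' : ℝ → Ω → Fin d → ℝ)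
    (hφT : ∀ T > (0:ℝ), IsRegCorrector μ θ A ξ T (φT T) (GφT T))
    (hφT' : ∀ T > (0:ℝ),
      IsRegCorrector μ θ (fun ω => mtrans (A ω)) ξ T (φT' T) (GφT' T)) :
    ∀ T > (0:ℝ),
      (∫ ω, dotp (ξ + GφT' T ω) (mvec (A ω) (ξ + GφT T ω)) ∂μ
        = (1/2) * ∫ ω, dotp (ξ + GφT T ω) (mvec (A ω) (ξ + GφT T ω)) ∂μ
          + (1/2) * ∫ ω, dotp (ξ + GφT' T ω) (mvec (A ω) (ξ + GφT' T ω)) ∂μ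
          + (2 * T)⁻¹ * ∫ ω, (φT T ω - φT' T ω) ^ 2 ∂μ) ∧
      α ≤ ∫ ω, dotp (ξ + GφT' T ω) (mvec (A ω) (ξ + GφT T ω)) ∂μ :=
  coercivity_of_A_T_general μ hα θ hθ A hAmeas hAell ξ hξ φT φT' GφT GφT' hφT hφT'
end
end

section
/- For T > 0 define ψ_{T,1} : (0,∞) → ℝ by ψ_{T,1}(λ) = 1/(T^{-1}+λ), and inductively ψ_{T,k+1} := (2^k ψ_{2T,k} − ψ_{T,k})/(2^k − 1) for k ≥ 1. Then for all integers k ≥ 1, all T > 0, and all λ > 0: 1/λ − ψ_{T,k}(λ) = 2^{-k(k-1)/2} T^{-k} / (λ ∏_{i=0}^{k-1} ((2^iT)^{-1}+λ)). -/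
noncomputable section

/-- The Richardson extrapolations `ψ_{T,k}` of the resolvent function
`λ ↦ 1/(T⁻¹ + λ)`. -/
def psiRes : ℕ → ℝ → ℝ → ℝ :=
  fun k T => rich (fun T : ℝ => fun l : ℝ => (T⁻¹ + l)⁻¹) k T

/-!
Since the Richardson weights `2^k/(2^k-1)` and `-1/(2^k-1)` sum to one, extrapolation commutes
with `x ↦ λ⁻¹ - x`, so the left-hand side is the `k`-th extrapolation `e_k(T)` of the error
`λ⁻¹ - (T⁻¹ + λ)⁻¹ = 1/(λ(1 + Tλ))`. Writing `b_i = 1 + 2^i T λ`, the claim becomes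
`e_k(T) = 1/(λ ∏_{i<k} b_i)`. Doubling `T` shifts `b_i` to `b_{i+1}`, and
`∏_{i≤k} b_i = b_0 ∏_{i<k} b_{i+1} = b_k ∏_{i<k} b_i`, so
`2^k e_k(2T) - e_k(T) = (2^k b_0 - b_k)/(λ ∏_{i≤k} b_i) = (2^k - 1)/(λ ∏_{i≤k} b_i)`,
which is the induction step.
-/

open Finset

theorem two_pow_sub_one_ne_zero {k : ℕ} (hk : k ≠ 0) : (2:ℝ) ^ k - 1 ≠ 0 :=
  sub_ne_zero.mpr (one_lt_pow₀ one_lt_two hk).ne'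

section Richardson

variable {X : Type*} [AddCommGroup X] [Module ℝ X]

theorem rich_succ (φ : ℝ → X) {k : ℕ} (hk : 1 ≤ k) (T : ℝ) :
    rich φ (k + 1) T = ((2:ℝ) ^ k - 1)⁻¹ • ((2:ℝ) ^ k • rich φ k (2 * T) - rich φ k T) := by
  obtain ⟨k, rfl⟩ := Nat.exists_eq_add_of_le' hk
  rfl

theorem rich_apply {α : Type*} (φ : ℝ → α → X) (k : ℕ) (T : ℝ) (a : α) :
    rich φ k T a = rich (fun T => φ T a) k T := by
  induction k using Nat.strong_induction_on generalizing T with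
  | _ k ih =>
    match k with
    | 0 | 1 => rfl
    | k + 2 => simp only [rich, Pi.smul_apply, Pi.sub_apply, ih (k + 1) (by omega)]

theorem rich_const_sub (c : X) (φ : ℝ → X) (k : ℕ) (T : ℝ) :
    rich (fun T => c - φ T) k T = c - rich φ k T := by
  induction k using Nat.strong_induction_on generalizing T with
  | _ k ih =>
    match k with
    | 0 | 1 => rfl
    | k + 2 =>
      have hcomb : ∀ a b : X, (2:ℝ) ^ (k + 1) • (c - a) - (c - b)
          = ((2:ℝ) ^ (k + 1) - 1) • c - ((2:ℝ) ^ (k + 1) • a - b) := fun a b => by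
        rw [sub_smul, one_smul, smul_sub]; abel
      simp only [rich, ih (k + 1) (by omega)]
      rw [hcomb, smul_sub, smul_smul, inv_mul_cancel₀ (two_pow_sub_one_ne_zero k.succ_ne_zero), one_smul]

end Richardson

theorem inv_sub_inv_inv_add (T l : ℝ) (hT : T ≠ 0) (hl : l ≠ 0) (hTl : 1 + T * l ≠ 0) :
    l⁻¹ - (T⁻¹ + l)⁻¹ = (l * (1 + T * l))⁻¹ := by
  have : T⁻¹ + l = (1 + T * l) / T := by field_simp
  rw [this, inv_div, mul_comm T l] at *
  field_simp
  ring

theorem rich_inv_sub_resolvent {k : ℕ} (hk : 1 ≤ k) {T l : ℝ} (hTl : 0 < T * l) :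
    rich (fun T => l⁻¹ - (T⁻¹ + l)⁻¹) k T = (l * ∏ i ∈ range k, (1 + 2 ^ i * T * l))⁻¹ := by
  induction k, hk using Nat.le_induction generalizing T with
  | base =>
    simpa [rich] using inv_sub_inv_inv_add T l (left_ne_zero_of_mul hTl.ne')
      (right_ne_zero_of_mul hTl.ne') (by positivity)
  | succ k hk ih =>
    have hl : l ≠ 0 := right_ne_zero_of_mul hTl.ne'
    rw [rich_succ _ hk, ih hTl, ih (by linarith : 0 < 2 * T * l)]
    set b : ℕ → ℝ := fun i => 1 + 2 ^ i * T * l with hb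
    have hb_pos : ∀ i, 0 < b i := fun i => by
      have : 0 < 2 ^ i * T * l := by rw [mul_assoc]; positivity
      simp only [hb]; linarith
    have h2T : ∀ i, 1 + 2 ^ i * (2 * T) * l = b (i + 1) := fun i => by simp only [hb]; ring
    have hu := two_pow_sub_one_ne_zero (Nat.one_le_iff_ne_zero.mp hk)
    have hb_ends : 2 ^ k * b 0 - b k = 2 ^ k - 1 := by simp only [hb]; ring
    simp only [h2T, smul_eq_mul]
    change _ = (l * ∏ i ∈ range (k + 1), b i)⁻¹
    have hshift : ∏ i ∈ range k, b (i + 1) = (∏ i ∈ range k, b i) * b k / b 0 := by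
      rw [← prod_range_succ, prod_range_succ', mul_div_cancel_right₀ _ (hb_pos 0).ne']
    have hQ : (∏ i ∈ range k, b i) ≠ 0 := (prod_pos fun i _ => hb_pos i).ne'
    have hbk := (hb_pos k).ne'
    have hb0 := (hb_pos 0).ne'
    rw [hshift, prod_range_succ]
    clear_value b
    field_simp
    linear_combination hb_ends

theorem prod_range_two_pow_mul (k : ℕ) (T : ℝ) :
    ∏ i ∈ range k, (2 ^ i * T) = 2 ^ (k * (k - 1) / 2) * T ^ k := by
  rw [prod_mul_distrib, prod_pow_eq_pow_sum, sum_range_id, prod_const, card_range]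

theorem inv_mul_prod_inv_add_eq (k : ℕ) {T : ℝ} (hT : T ≠ 0) (l : ℝ) :
    (2 ^ (k * (k - 1) / 2))⁻¹ * (T ^ k)⁻¹ * (l * ∏ i ∈ range k, ((2 ^ i * T)⁻¹ + l))⁻¹
      = (l * ∏ i ∈ range k, (1 + 2 ^ i * T * l))⁻¹ := by
  rw [← mul_inv, ← mul_inv, ← prod_range_two_pow_mul, mul_left_comm, ← prod_mul_distrib]
  congr 2
  refine prod_congr rfl fun i _ => ?_
  rw [mul_add, mul_inv_cancel₀ (by positivity), mul_assoc]

/-- identity `eq:induc-psi`: for all `k ≥ 1`, `T > 0`, `λ > 0`,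
`1/λ − ψ_{T,k}(λ) = 2^{−k(k−1)/2} T^{−k} / (λ ∏_{i=0}^{k-1} ((2^iT)^{-1} + λ))`. -/
theorem resolvent_extrapolation_identity :
    ∀ (k : ℕ), 1 ≤ k → ∀ (T : ℝ), 0 < T → ∀ (l : ℝ), 0 < l →
      l⁻¹ - psiRes k T l
        = ((2:ℝ) ^ (k * (k - 1) / 2))⁻¹ * (T ^ k)⁻¹ *
            (l * ∏ i ∈ Finset.range k, (((2:ℝ) ^ i * T)⁻¹ + l))⁻¹ := by
  intro k hk T hT l hl
  rw [inv_mul_prod_inv_add_eq k hT.ne', psiRes, rich_apply, ← rich_const_sub,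
    rich_inv_sub_resolvent hk (mul_pos hT hl)]
end
end
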